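/- arXiv:0903.4000 — 3 statements merged into one kernel-verified Lean document; each statement's English description precedes it below -/
import Mathlib

section
/- Let Ω ⊂ ℝ^d be a bounded Lipschitz domain and let (u, p) be a smooth solution of the system: for all φ ∈ H¹(Ω), ((div u)_t, φ) + κ(∇p, ∇φ) = 0, and for all v ∈ H¹(Ω)^d, α(div u, div v) + β(∇u, ∇v) − (p, div v) = ⟨f, v⟩ with f independent of t. Define E(t) := ½[β‖∇u(t)‖²_{L²} + α‖div u(t)‖²_{L²} − 2⟨f, u(t)⟩]. Then for all t ∈ (0,T], E(t) + κ ∫₀ᵗ ‖∇p(s)‖²_{L²} ds = E(0). -/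
/-!
Along a trajectory the energy `E(t) = ½ (β‖∇u‖² + α‖div u‖²) - ⟨f, u⟩` has derivative
`β(∇u, ∇u_t) + α(div u, div u_t) - ⟨f, u_t⟩`, which the momentum equation tested with
`v = u_t` turns into `(p, div u_t)`, and the mass equation tested with `φ = p` into
`-κ‖∇p‖²`. The energy law is the fundamental theorem of calculus for this derivative.
-/

open scoped RealInnerProductSpace

section Energy

variable {V L2 GV : Type*}
  [NormedAddCommGroup V] [InnerProductSpace ℝ V]
  [NormedAddCommGroup L2] [InnerProductSpace ℝ L2]
  [NormedAddCommGroup GV] [InnerProductSpace ℝ GV]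

noncomputable def gelEnergy (α β : ℝ) (dvg : V →L[ℝ] L2) (gradV : V →L[ℝ] GV) (f : V →L[ℝ] ℝ)
    (v : V) : ℝ :=
  (1 / 2) * (β * ‖gradV v‖ ^ 2 + α * ‖dvg v‖ ^ 2 - 2 * f v)

theorem HasDerivAt.gelEnergy (α β : ℝ) (dvg : V →L[ℝ] L2) (gradV : V →L[ℝ] GV)
    (f : V →L[ℝ] ℝ) {u : ℝ → V} {u' : V} {s : ℝ} (hu : HasDerivAt u u' s) :
    HasDerivAt (fun r ↦ gelEnergy α β dvg gradV f (u r))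
      (β * ⟪gradV (u s), gradV u'⟫ + α * ⟪dvg (u s), dvg u'⟫ - f u') s := by
  have hgrad := (gradV.hasFDerivAt.comp_hasDerivAt s hu).norm_sq
  have hdvg := (dvg.hasFDerivAt.comp_hasDerivAt s hu).norm_sq
  have hf := f.hasFDerivAt.comp_hasDerivAt s hu
  refine ((((hgrad.const_mul β).add (hdvg.const_mul α)).sub (hf.const_mul 2)).const_mul
    (1 / 2)).congr_deriv ?_
  simp only [Function.comp_apply]
  ring

end Energy

theorem add_integral_eq_of_hasDerivAt_neg {E g : ℝ → ℝ} {a b : ℝ}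
    (hE : ∀ s ∈ Set.uIcc a b, HasDerivAt E (-g s) s) (hg : ContinuousOn g (Set.uIcc a b)) :
    E b + ∫ s in a..b, g s = E a := by
  have hftc := intervalIntegral.integral_eq_sub_of_hasDerivAt hE hg.neg.intervalIntegrable
  rw [intervalIntegral.integral_neg] at hftc
  linarith

theorem gel_energy_law_general
    {L2 H1 V GS GV : Type*}
    [NormedAddCommGroup L2] [InnerProductSpace ℝ L2]
    [NormedAddCommGroup H1] [InnerProductSpace ℝ H1]
    [NormedAddCommGroup V] [InnerProductSpace ℝ V]
    [NormedAddCommGroup GS] [InnerProductSpace ℝ GS]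
    [NormedAddCommGroup GV] [InnerProductSpace ℝ GV]
    (T α β κ : ℝ)
    (dvg : V →L[ℝ] L2) (gradV : V →L[ℝ] GV)
    (ι : H1 →L[ℝ] L2) (gradS : H1 →L[ℝ] GS)
    (f : V →L[ℝ] ℝ)
    (u u' : ℝ → V) (p : ℝ → H1)
    (hu : ∀ t ∈ Set.Icc (0:ℝ) T, HasDerivAt u (u' t) t)
    (hpcont : ContinuousOn p (Set.Icc (0:ℝ) T))
    (heq1 : ∀ t ∈ Set.Icc (0:ℝ) T, ∀ φ : H1,
      ⟪dvg (u' t), ι φ⟫ + κ * ⟪gradS (p t), gradS φ⟫ = 0)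
    (heq2 : ∀ t ∈ Set.Icc (0:ℝ) T, ∀ v : V,
      α * ⟪dvg (u t), dvg v⟫ + β * ⟪gradV (u t), gradV v⟫ - ⟪ι (p t), dvg v⟫ = f v)
    (E : ℝ → ℝ)
    (hE : ∀ t : ℝ, E t
      = (1/2) * (β * ‖gradV (u t)‖^2 + α * ‖dvg (u t)‖^2 - 2 * f (u t))) :
    ∀ t ∈ Set.Ioc (0:ℝ) T,
      E t + κ * ∫ s in (0:ℝ)..t, ‖gradS (p s)‖^2 = E 0 := by
  intro t ht
  have hsub : Set.uIcc 0 t ⊆ Set.Icc 0 T := by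
    rw [Set.uIcc_of_le ht.1.le]
    exact Set.Icc_subset_Icc le_rfl ht.2
  have hE_fun : E = fun r ↦ gelEnergy α β dvg gradV f (u r) := funext hE
  have hderiv : ∀ s ∈ Set.uIcc 0 t, HasDerivAt E (-(κ * ‖gradS (p s)‖ ^ 2)) s := by
    intro s hs
    have momentum := heq2 s (hsub hs) (u' s)
    have mass := heq1 s (hsub hs) (p s)
    rw [real_inner_self_eq_norm_sq, real_inner_comm] at mass
    rw [hE_fun]
    exact ((hu s (hsub hs)).gelEnergy α β dvg gradV f).congr_deriv (by linarith)
  have hcont : ContinuousOn (fun s ↦ κ * ‖gradS (p s)‖ ^ 2) (Set.uIcc 0 t) :=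
    (((gradS.continuous.comp_continuousOn (hpcont.mono hsub)).norm).pow 2).const_smul κ
  rw [← intervalIntegral.integral_const_mul]
  exact add_integral_eq_of_hasDerivAt_neg hderiv hcont

/-- dissipative energy law for the gel system.  If for all `t`,
`((div u)_t, φ) + κ(∇p, ∇φ) = 0` for every `φ ∈ H¹(Ω)` and
`α(div u, div v) + β(∇u, ∇v) − (p, div v) = ⟨f, v⟩` for every `v ∈ H¹(Ω)^d`
(with `f` independent of `t`), then for
`E(t) := ½[β‖∇u(t)‖² + α‖div u(t)‖² − 2⟨f, u(t)⟩]` one has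
`E(t) + κ ∫₀ᵗ ‖∇p(s)‖² ds = E(0)` for all `t ∈ (0,T]`.  Here `L2 = L²(Ω)`,
`H1 = H¹(Ω)`, `V = H¹(Ω)^d`, `GS`/`GV` the targets of the scalar/vector gradients,
and `ι : H¹ ↪ L²` the inclusion. -/
theorem gel_energy_law
    {L2 H1 V GS GV : Type*}
    [NormedAddCommGroup L2] [InnerProductSpace ℝ L2]
    [NormedAddCommGroup H1] [InnerProductSpace ℝ H1]
    [NormedAddCommGroup V] [InnerProductSpace ℝ V]
    [NormedAddCommGroup GS] [InnerProductSpace ℝ GS]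
    [NormedAddCommGroup GV] [InnerProductSpace ℝ GV]
    (T α β κ : ℝ) (hT : 0 < T) (hα : 0 < α) (hβ : 0 < β) (hκ : 0 < κ)
    (dvg : V →L[ℝ] L2) (gradV : V →L[ℝ] GV)
    (ι : H1 →L[ℝ] L2) (gradS : H1 →L[ℝ] GS)
    (f : V →L[ℝ] ℝ)
    (u u' : ℝ → V) (p : ℝ → H1)
    (hu : ∀ t ∈ Set.Icc (0:ℝ) T, HasDerivAt u (u' t) t)
    (hpcont : ContinuousOn p (Set.Icc (0:ℝ) T))
    (heq1 : ∀ t ∈ Set.Icc (0:ℝ) T, ∀ φ : H1,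
      ⟪dvg (u' t), ι φ⟫ + κ * ⟪gradS (p t), gradS φ⟫ = 0)
    (heq2 : ∀ t ∈ Set.Icc (0:ℝ) T, ∀ v : V,
      α * ⟪dvg (u t), dvg v⟫ + β * ⟪gradV (u t), gradV v⟫ - ⟪ι (p t), dvg v⟫ = f v)
    (E : ℝ → ℝ)
    (hE : ∀ t : ℝ, E t
      = (1/2) * (β * ‖gradV (u t)‖^2 + α * ‖dvg (u t)‖^2 - 2 * f (u t))) :
    ∀ t ∈ Set.Ioc (0:ℝ) T,
      E t + κ * ∫ s in (0:ℝ)..t, ‖gradS (p s)‖^2 = E 0 :=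
  gel_energy_law_general T α β κ dvg gradV ι gradS f u u' p hu hpcont heq1 heq2 E hE
end

section
/- Suppose the fully discrete gel scheme satisfies the discrete energy identity J_h^{ℓ+1} + ΔtΣ_{n=0}^ℓ[κ‖∇p_h^{n+1}‖² + (Δt/2)(β‖d_t∇u_h^{n+1}‖² + α‖d_t q_h^n‖²)] = J_h^0 − κ(Δt)²Σ_{n=0}^ℓ(d_t∇p̃_h^{n+1}, ∇p_h^{n+1}), that the inverse inequality ‖∇φ_h‖_{L²} ≤ c₀h^{-1}‖φ_h‖_{L²} holds on the finite element space, and that the inf-sup condition gives ‖p̃_h^{n+1} − p̃_h^n‖_{L²} ≤ β₀^{-1}βΔt‖d_t∇u_h^{n+1}‖_{L²}. Then, provided Δt ≤ β₀²h²/(4κβc₀²), the discrete energy inequality holds: J_h^{ℓ+1} + ΔtΣ_{n=0}^ℓ[(κ/2)‖∇p_h^{n+1}‖² + (Δt/4)(β‖d_t∇u_h^{n+1}‖² + α‖d_t q_h^n‖²)] ≤ J_h^0. -/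
/-! The coupling term `κ Δt² (d_t∇p̃ⁿ⁺¹, ∇pⁿ⁺¹)` is split by Young's inequality into `κΔt/2 ‖∇pⁿ⁺¹‖²`,
absorbed by half of the pressure dissipation, and `κΔt ‖∇(p̃ⁿ⁺¹ - p̃ⁿ)‖²`. The inverse inequality
and the inf-sup bound turn the latter into `κΔt (c₀β/(hβ₀))² Δt² ‖d_t∇uⁿ⁺¹‖²`, which the mesh
condition bounds by `(β/4) Δt² ‖d_t∇uⁿ⁺¹‖²`, half of the displacement dissipation. -/

open scoped RealInnerProductSpace

theorem add_mul_sum_le_of_energy_identity {ι : Type*} (s : Finset ι) {a b c d : ℝ}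
    {E T R : ι → ℝ} (hid : a + c * ∑ i ∈ s, E i = b - d * ∑ i ∈ s, R i)
    (hE : ∀ i ∈ s, E i = 2 * T i) (hR : ∀ i ∈ s, -(d * R i) ≤ c * T i) :
    a + c * ∑ i ∈ s, T i ≤ b := by
  have hsumE : ∑ i ∈ s, E i = 2 * ∑ i ∈ s, T i := by
    rw [Finset.mul_sum]; exact Finset.sum_congr rfl hE
  have hsumR : -(d * ∑ i ∈ s, R i) ≤ c * ∑ i ∈ s, T i := by
    simpa only [Finset.mul_sum, ← Finset.sum_neg_distrib] using Finset.sum_le_sum hR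
  rw [hsumE] at hid
  linarith

theorem abs_inner_smul_le {F : Type*} [NormedAddCommGroup F] [InnerProductSpace ℝ F]
    {t : ℝ} (ht : 0 ≤ t) (x y : F) : |⟪t • x, y⟫| ≤ t * (‖x‖ ^ 2 + ‖y‖ ^ 2 / 2) := by
  rw [real_inner_smul_left, abs_mul, abs_of_nonneg ht]
  gcongr
  have hxy := abs_real_inner_le_norm x y
  nlinarith [sq_nonneg (‖x‖ - ‖y‖), sq_nonneg ‖x‖]

theorem mul_sq_le_of_mesh_condition {κ β Δt h c₀ β₀ : ℝ} (hκ : 0 < κ) (hβ : 0 < β)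
    (hh : 0 < h) (hc₀ : 0 < c₀) (hβ₀ : 0 < β₀)
    (hmesh : Δt ≤ β₀ ^ 2 * h ^ 2 / (4 * κ * β * c₀ ^ 2)) :
    κ * Δt * (c₀ * h⁻¹ * β₀⁻¹ * β) ^ 2 ≤ β / 4 := by
  calc κ * Δt * (c₀ * h⁻¹ * β₀⁻¹ * β) ^ 2
      ≤ κ * (β₀ ^ 2 * h ^ 2 / (4 * κ * β * c₀ ^ 2)) * (c₀ * h⁻¹ * β₀⁻¹ * β) ^ 2 := by gcongr
    _ = β / 4 := by field_simp

theorem neg_mul_inner_inv_smul_le {F : Type*} [NormedAddCommGroup F] [InnerProductSpace ℝ F]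
    {κ Δt β c D : ℝ} {x y : F} (hκ : 0 ≤ κ) (hΔt : 0 < Δt) (hx : ‖x‖ ≤ c * Δt * D)
    (hc : κ * Δt * c ^ 2 ≤ β / 4) :
    -(κ * Δt ^ 2 * ⟪Δt⁻¹ • x, y⟫) ≤ Δt * (κ / 2 * ‖y‖ ^ 2 + Δt / 4 * (β * D ^ 2)) := by
  have hx2 : κ * Δt * ‖x‖ ^ 2 ≤ Δt ^ 2 * (β / 4 * D ^ 2) := by
    calc κ * Δt * ‖x‖ ^ 2 ≤ κ * Δt * (c * Δt * D) ^ 2 := by gcongr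
      _ = (κ * Δt * c ^ 2) * (Δt ^ 2 * D ^ 2) := by ring
      _ ≤ β / 4 * (Δt ^ 2 * D ^ 2) := by gcongr
      _ = Δt ^ 2 * (β / 4 * D ^ 2) := by ring
  calc -(κ * Δt ^ 2 * ⟪Δt⁻¹ • x, y⟫)
      ≤ κ * Δt ^ 2 * |⟪Δt⁻¹ • x, y⟫| := by
        rw [← mul_neg]; gcongr; exact neg_le_abs _
    _ ≤ κ * Δt ^ 2 * (Δt⁻¹ * (‖x‖ ^ 2 + ‖y‖ ^ 2 / 2)) := by
        gcongr; exact abs_inner_smul_le (inv_nonneg.mpr hΔt.le) x y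
    _ = κ * Δt * ‖x‖ ^ 2 + Δt * (κ / 2 * ‖y‖ ^ 2) := by field_simp
    _ ≤ Δt * (κ / 2 * ‖y‖ ^ 2 + Δt / 4 * (β * D ^ 2)) := by linear_combination hx2

/-- discrete energy inequality for the fully discrete gel scheme under
the mesh condition `Δt ≤ β₀²h²/(4κβc₀²)`.  Given the discrete energy identity
(hypothesis `hEnergy`, with `p_h^{n+1} = p̃^{n+1} + α q^n` and the convention
`q^{-1} = q^0` via truncated subtraction), the inverse inequality
`‖∇φ_h‖ ≤ c₀ h⁻¹ ‖φ_h‖_{L²}` (`hinv`), and the inf-sup bound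
`‖p̃^{n+1} − p̃^n‖_{L²} ≤ β₀⁻¹ β Δt ‖d_t ∇u^{n+1}‖` (`hps`), one has
`J^{ℓ+1} + ΔtΣ_{n=0}^ℓ[(κ/2)‖∇p^{n+1}‖² + (Δt/4)(β‖d_t∇u^{n+1}‖² + α‖d_t q^n‖²)]
≤ J^0`. -/
theorem gel_fully_discrete_energy_inequality
    {L2 Vh Mh GV GM : Type*}
    [NormedAddCommGroup L2] [InnerProductSpace ℝ L2]
    [NormedAddCommGroup Vh] [InnerProductSpace ℝ Vh]
    [NormedAddCommGroup Mh] [InnerProductSpace ℝ Mh]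
    [NormedAddCommGroup GV] [InnerProductSpace ℝ GV]
    [NormedAddCommGroup GM] [InnerProductSpace ℝ GM]
    (α β κ Δt h c₀ β₀ : ℝ)
    (hα : 0 < α) (hβ : 0 < β) (hκ : 0 < κ) (hΔt : 0 < Δt)
    (hh : 0 < h) (hc₀ : 0 < c₀) (hβ₀ : 0 < β₀)
    (gradV : Vh →L[ℝ] GV) (emb : Mh →L[ℝ] L2) (gradM : Mh →L[ℝ] GM)
    (u : ℕ → Vh) (pt : ℕ → Mh) (q : ℕ → Mh) (J : ℕ → ℝ)
    -- discrete energy identity (Lemma 3.3 of the paper), assumed available: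
    (hEnergy : ∀ ℓ : ℕ,
      J (ℓ+1) + Δt * ∑ n ∈ Finset.range (ℓ+1),
        (κ * ‖gradM (pt (n+1) + α • q n)‖^2
          + (Δt/2) * (β * ‖Δt⁻¹ • (gradV (u (n+1)) - gradV (u n))‖^2
            + α * ‖Δt⁻¹ • (emb (q n) - emb (q (n-1)))‖^2))
      = J 0 - κ * Δt^2 * ∑ n ∈ Finset.range (ℓ+1),
          ⟪Δt⁻¹ • (gradM (pt (n+1)) - gradM (pt n)), gradM (pt (n+1) + α • q n)⟫)
    -- inverse inequality on the finite element space: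
    (hinv : ∀ m : Mh, ‖gradM m‖ ≤ c₀ * h⁻¹ * ‖emb m‖)
    -- inf-sup bound on the pressure increment:
    (hps : ∀ n : ℕ, ‖emb (pt (n+1) - pt n)‖
      ≤ β₀⁻¹ * β * Δt * ‖Δt⁻¹ • (gradV (u (n+1)) - gradV (u n))‖)
    -- mesh constraint:
    (hmesh : Δt ≤ β₀^2 * h^2 / (4 * κ * β * c₀^2)) :
    ∀ ℓ : ℕ,
      J (ℓ+1) + Δt * ∑ n ∈ Finset.range (ℓ+1),
        ((κ/2) * ‖gradM (pt (n+1) + α • q n)‖^2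
          + (Δt/4) * (β * ‖Δt⁻¹ • (gradV (u (n+1)) - gradV (u n))‖^2
            + α * ‖Δt⁻¹ • (emb (q n) - emb (q (n-1)))‖^2))
      ≤ J 0 := by
  intro ℓ
  refine add_mul_sum_le_of_energy_identity _ (hEnergy ℓ) (fun n _ => by ring) fun n _ => ?_
  have hincrement : ‖gradM (pt (n+1)) - gradM (pt n)‖
      ≤ c₀ * h⁻¹ * β₀⁻¹ * β * Δt * ‖Δt⁻¹ • (gradV (u (n+1)) - gradV (u n))‖ := by
    rw [← map_sub]
    calc _ ≤ c₀ * h⁻¹ * ‖emb (pt (n+1) - pt n)‖ := hinv _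
      _ ≤ c₀ * h⁻¹ * (β₀⁻¹ * β * Δt * ‖Δt⁻¹ • (gradV (u (n+1)) - gradV (u n))‖) := by
          gcongr; exact hps n
      _ = _ := by ring
  grw [neg_mul_inner_inv_smul_le hκ.le hΔt hincrement
    (mul_sq_le_of_mesh_condition hκ hβ hh hc₀ hβ₀ hmesh)]
  gcongr
  exact le_add_of_nonneg_right (by positivity)
end

section
/- Let {(u_h^n, p̃_h^n, q_h^n)}_{n≥1} satisfy the fully discrete gel scheme with q_h⁰ the L² projection of q₀ (so (q_h⁰, 1) = (q₀, 1) = C_q). Then for all n ≥ 0, (q_h^n, 1) = C_q; for all n ≥ 1, ⟨u_h^n, ν⟩_{∂Ω} = C_q; and for all n ≥ 1, (p̃_h^n, 1) = C_{p̃} := (β/d)C_q − (1/d)⟨f, x⟩, where the last identity is obtained by choosing v_h = x in the discrete Stokes equation (valid since x ∈ V_h for finite element spaces containing linear polynomials). -/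
/-!
Testing the diffusion step with the constant `1`, whose gradient vanishes, shows that the
mean of `q_h^n` never changes. Testing the constraint `div u_h^{n+1} = q_h^n` with `1` then
gives the boundary flux through the divergence theorem, and testing the Stokes equation with
the position field `x` (for which `(∇w, ∇x) = (div w, 1)` and `div x = d`) expresses the mean
of the pressure through that flux and `⟨f, x⟩`.
-/

open scoped RealInnerProductSpace

theorem inner_eq_of_implicit_step_test_ker {L2 M G : Type*}
    [NormedAddCommGroup L2] [InnerProductSpace ℝ L2]
    [NormedAddCommGroup M] [NormedSpace ℝ M]
    [NormedAddCommGroup G] [InnerProductSpace ℝ G] (emb : M →L[ℝ] L2) (grad : M →L[ℝ] G)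
    {Δt κ : ℝ} (hΔt : Δt ≠ 0) {ψ q q' r : M} (hψ : grad ψ = 0)
    (hstep : ⟪emb (Δt⁻¹ • (q' - q)), emb ψ⟫ + κ * ⟪grad r, grad ψ⟫ = 0) :
    ⟪emb q', emb ψ⟫ = ⟪emb q, emb ψ⟫ := by
  rw [hψ, inner_zero_right, mul_zero, add_zero, map_smul, inner_smul_left, map_sub,
    inner_sub_left] at hstep
  simpa [hΔt, sub_eq_zero] using hstep

theorem inner_eq_of_mul_sub_inner_natCast_smul_eq {L2 : Type*}
    [NormedAddCommGroup L2] [InnerProductSpace ℝ L2] {d : ℕ} (hd : d ≠ 0) {β m F : ℝ}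
    {p c : L2} (h : β * m - ⟪p, (d : ℝ) • c⟫ = F) :
    ⟪p, c⟫ = (β / d) * m - (1 / d) * F := by
  rw [inner_smul_right] at h
  have hd' : (d : ℝ) ≠ 0 := Nat.cast_ne_zero.mpr hd
  field_simp
  linarith

theorem gel_fully_discrete_conservation_laws_general
    {L2 Vh Mh GV GM : Type*}
    [NormedAddCommGroup L2] [InnerProductSpace ℝ L2]
    [NormedAddCommGroup Vh] [InnerProductSpace ℝ Vh]
    [NormedAddCommGroup Mh] [InnerProductSpace ℝ Mh]
    [NormedAddCommGroup GV] [InnerProductSpace ℝ GV]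
    [NormedAddCommGroup GM] [InnerProductSpace ℝ GM]
    (d : ℕ) (hd : 0 < d) (α β κ Δt : ℝ)
    (hΔt : 0 < Δt)
    (dvg : Vh →L[ℝ] L2) (gradV : Vh →L[ℝ] GV)
    (emb : Mh →L[ℝ] L2) (gradM : Mh →L[ℝ] GM)
    (c1 : L2) (bflux : Vh →L[ℝ] ℝ) (f : Vh →L[ℝ] ℝ)
    (oneM : Mh) (honegrad : gradM oneM = 0) (honeemb : emb oneM = c1)
    (xvec : Vh) (hdivx : dvg xvec = (d : ℝ) • c1)
    (hgradx : ∀ w : Vh, ⟪gradV w, gradV xvec⟫ = ⟪dvg w, c1⟫)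
    (hdivthm : ∀ v : Vh, bflux v = ⟪dvg v, c1⟫)
    (u : ℕ → Vh) (pt : ℕ → Mh) (q : ℕ → Mh)
    (heq1 : ∀ n : ℕ, ∀ vh : Vh,
      β * ⟪gradV (u (n+1)), gradV vh⟫ - ⟪emb (pt (n+1)), dvg vh⟫ = f vh)
    (heq2 : ∀ n : ℕ, ∀ φh : Mh,
      ⟪dvg (u (n+1)), emb φh⟫ = ⟪emb (q n), emb φh⟫)
    (heq3 : ∀ n : ℕ, ∀ ψh : Mh,
      ⟪emb (Δt⁻¹ • (q (n+1) - q n)), emb ψh⟫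
        + κ * ⟪gradM (α • q (n+1) + pt (n+1)), gradM ψh⟫ = 0)
    (Cq : ℝ) (hq0 : ⟪emb (q 0), c1⟫ = Cq) :
    (∀ n : ℕ, ⟪emb (q n), c1⟫ = Cq)
    ∧ (∀ n : ℕ, bflux (u (n+1)) = Cq)
    ∧ (∀ n : ℕ, ⟪emb (pt (n+1)), c1⟫ = (β / d) * Cq - (1 / d) * f xvec) := by
  have hq : ∀ n : ℕ, ⟪emb (q n), c1⟫ = Cq := by
    intro n
    induction n with
    | zero => exact hq0
    | succ n ih =>
      rw [← ih, ← honeemb]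
      exact inner_eq_of_implicit_step_test_ker emb gradM hΔt.ne' honegrad (heq3 n oneM)
  have hdiv : ∀ n : ℕ, ⟪dvg (u (n+1)), c1⟫ = Cq := fun n => by
    rw [← honeemb, heq2 n oneM, honeemb, hq n]
  refine ⟨hq, fun n => (hdivthm _).trans (hdiv n), fun n => ?_⟩
  have hstokes := heq1 n xvec
  rw [hgradx, hdiv n, hdivx] at hstokes
  exact inner_eq_of_mul_sub_inner_natCast_smul_eq hd.ne' hstokes

/-- discrete conservation laws for the fully discrete gel scheme.
With `(q_h⁰, 1) = C_q`, one has `(q_h^n, 1) = C_q` for all `n ≥ 0`,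
`⟨u_h^n, ν⟩_{∂Ω} = C_q` for all `n ≥ 1`, and
`(p̃_h^n, 1) = C_{p̃} := (β/d)C_q − (1/d)⟨f, x⟩` for all `n ≥ 1` (the latter by
testing with `v_h = x ∈ V_h`).  Here `oneM ∈ M_h = W_h` is the constant function `1`
(`gradM oneM = 0`, `emb oneM = c1`), `xvec ∈ V_h` the position field `x`
(`div x = d`, `(∇w, ∇x) = (div w, 1)`), and `bflux v = ⟨v, ν⟩_{∂Ω} = (div v, 1)` is
the divergence theorem. -/
theorem gel_fully_discrete_conservation_laws
    {L2 Vh Mh GV GM : Type*}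
    [NormedAddCommGroup L2] [InnerProductSpace ℝ L2]
    [NormedAddCommGroup Vh] [InnerProductSpace ℝ Vh]
    [NormedAddCommGroup Mh] [InnerProductSpace ℝ Mh]
    [NormedAddCommGroup GV] [InnerProductSpace ℝ GV]
    [NormedAddCommGroup GM] [InnerProductSpace ℝ GM]
    (d : ℕ) (hd : 0 < d) (α β κ Δt : ℝ)
    (hα : 0 < α) (hβ : 0 < β) (hκ : 0 < κ) (hΔt : 0 < Δt)
    (dvg : Vh →L[ℝ] L2) (gradV : Vh →L[ℝ] GV)
    (emb : Mh →L[ℝ] L2) (gradM : Mh →L[ℝ] GM)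
    (c1 : L2) (bflux : Vh →L[ℝ] ℝ) (f : Vh →L[ℝ] ℝ)
    (oneM : Mh) (honegrad : gradM oneM = 0) (honeemb : emb oneM = c1)
    (xvec : Vh) (hdivx : dvg xvec = (d : ℝ) • c1)
    (hgradx : ∀ w : Vh, ⟪gradV w, gradV xvec⟫ = ⟪dvg w, c1⟫)
    (hdivthm : ∀ v : Vh, bflux v = ⟪dvg v, c1⟫)
    (u : ℕ → Vh) (pt : ℕ → Mh) (q : ℕ → Mh)
    (heq1 : ∀ n : ℕ, ∀ vh : Vh,
      β * ⟪gradV (u (n+1)), gradV vh⟫ - ⟪emb (pt (n+1)), dvg vh⟫ = f vh)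
    (heq2 : ∀ n : ℕ, ∀ φh : Mh,
      ⟪dvg (u (n+1)), emb φh⟫ = ⟪emb (q n), emb φh⟫)
    (heq3 : ∀ n : ℕ, ∀ ψh : Mh,
      ⟪emb (Δt⁻¹ • (q (n+1) - q n)), emb ψh⟫
        + κ * ⟪gradM (α • q (n+1) + pt (n+1)), gradM ψh⟫ = 0)
    (Cq : ℝ) (hq0 : ⟪emb (q 0), c1⟫ = Cq) :
    (∀ n : ℕ, ⟪emb (q n), c1⟫ = Cq)
    ∧ (∀ n : ℕ, bflux (u (n+1)) = Cq)
    ∧ (∀ n : ℕ, ⟪emb (pt (n+1)), c1⟫ = (β / d) * Cq - (1 / d) * f xvec) :=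
  gel_fully_discrete_conservation_laws_general d hd α β κ Δt hΔt dvg gradV emb gradM c1 bflux f oneM
    honegrad honeemb xvec hdivx hgradx hdivthm u pt q heq1 heq2 heq3 Cq hq0
end
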